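/- arXiv:1504.06837 — 2 statements merged into one kernel-verified Lean document; each statement's English description precedes it below -/
import Mathlib

section
/- Suppose Ω is partitioned into pairwise disjoint sets P_L, N_L and U with P_L ∪ N_L ∪ U = Ω. Let P_U ⊆ U be nonempty with |P_U| = m and P_L ∪ P_U ≠ Ω, let r ∈ {1, …, |Ω|}, and let T be a real number with TPR(P_U, r) ≤ T. Let F = {S ⊆ U : |S| = m and TPR(S, r) ≥ T}, and suppose P*_U ∈ F attains the minimum of TPR(·, r) over F. Then for every S ∈ F, FPR(P_L ∪ S, r) ≤ FPR(P_L ∪ P*_U, r) ≤ FPR(P_L ∪ P_U, r); that is, FPR(P_L ∪ P*_U, r) is the greatest lower bound on FPR(P_L ∪ P_U, r) achievable by surrogate positive sets in F. -/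
/-!
For sets `X` of a fixed size disjoint from `P_L`, the complement of `P_L ∪ X` has the same
size for every `X`, and its top-`r` part has `|top(Ω, r)| - |top(P_L, r)| - |top(X, r)|`
elements. So `FPR(P_L ∪ X, r)` decreases as `|top(X, r)|`, i.e. `TPR(X, r)`, grows (when the
complement is empty both rates are `0`). Both inequalities then follow from
`TPR(P*_U) ≤ TPR(S)` and `TPR(P_U) ≤ T ≤ TPR(P*_U)`.
-/

open Finset

variable {α : Type*} [Fintype α] [DecidableEq α]

/-- `top S r`: the elements of `S` ranked in the top `r` positions.
Ranks are 1-based: the rank of `x` is `(rk x : ℕ) + 1`, so `rank x ≤ r ↔ (rk x : ℕ) < r`. -/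
def topSet (rk : α ≃ Fin (Fintype.card α)) (S : Finset α) (r : ℕ) : Finset α :=
  S.filter fun x => ((rk x : Fin (Fintype.card α)) : ℕ) < r

/-- True positive rate of the positive set `S` at cutoff rank `r`. -/
noncomputable def TPR (rk : α ≃ Fin (Fintype.card α)) (S : Finset α) (r : ℕ) : ℝ :=
  (topSet rk S r).card / S.card

/-- False positive rate of the positive set `S` at cutoff rank `r`:
the TPR of the complement `Ω \ S`. -/
noncomputable def FPR (rk : α ≃ Fin (Fintype.card α)) (S : Finset α) (r : ℕ) : ℝ :=
  TPR rk Sᶜ r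

lemma topSet_compl (rk : α ≃ Fin (Fintype.card α)) (S : Finset α) (r : ℕ) :
    topSet rk Sᶜ r = topSet rk univ r \ topSet rk S r := by
  ext x
  simp only [topSet, mem_filter, mem_compl, mem_univ, true_and, mem_sdiff]
  tauto

omit [DecidableEq α] in
lemma topSet_mono (rk : α ≃ Fin (Fintype.card α)) {S T : Finset α} (h : S ⊆ T) (r : ℕ) :
    topSet rk S r ⊆ topSet rk T r :=
  filter_subset_filter _ h

lemma card_topSet_compl (rk : α ≃ Fin (Fintype.card α)) (S : Finset α) (r : ℕ) :
    #(topSet rk Sᶜ r) = #(topSet rk univ r) - #(topSet rk S r) := by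
  rw [topSet_compl, card_sdiff_of_subset (topSet_mono rk (subset_univ S) r)]

lemma card_topSet_union (rk : α ≃ Fin (Fintype.card α)) {S T : Finset α} (h : Disjoint S T)
    (r : ℕ) : #(topSet rk (S ∪ T) r) = #(topSet rk S r) + #(topSet rk T r) := by
  rw [topSet, filter_union, card_union_of_disjoint (disjoint_filter_filter h)]
  rfl

omit [DecidableEq α] in
lemma card_topSet_le_of_TPR_le (rk : α ≃ Fin (Fintype.card α)) {X Y : Finset α} {r : ℕ}
    (hcard : #X = #Y) (h : TPR rk Y r ≤ TPR rk X r) :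
    #(topSet rk Y r) ≤ #(topSet rk X r) := by
  rcases Nat.eq_zero_or_pos #Y with hY | hY
  · simp [card_eq_zero.mp hY, topSet]
  · rw [TPR, TPR, hcard, div_le_div_iff_of_pos_right (by exact_mod_cast hY)] at h
    exact_mod_cast h

lemma FPR_union_le_of_TPR_le (rk : α ≃ Fin (Fintype.card α)) {P X Y : Finset α} {r : ℕ}
    (hX : Disjoint P X) (hY : Disjoint P Y) (hcard : #X = #Y)
    (h : TPR rk Y r ≤ TPR rk X r) : FPR rk (P ∪ X) r ≤ FPR rk (P ∪ Y) r := by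
  have hnum : #(topSet rk (P ∪ X)ᶜ r) ≤ #(topSet rk (P ∪ Y)ᶜ r) := by
    have := card_topSet_le_of_TPR_le rk hcard h
    rw [card_topSet_compl, card_topSet_compl, card_topSet_union rk hX,
      card_topSet_union rk hY]
    omega
  have hden : #(P ∪ X)ᶜ = #(P ∪ Y)ᶜ := by
    rw [card_compl, card_compl, card_union_of_disjoint hX, card_union_of_disjoint hY, hcard]
  rw [FPR, FPR, TPR, TPR, hden]
  exact div_le_div_of_nonneg_right (by exact_mod_cast hnum) (Nat.cast_nonneg _)

theorem stmt_7_general (rk : α ≃ Fin (Fintype.card α)) (PL U : Finset α)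
    (hPU : Disjoint PL U)
    (PU : Finset α) (hPUsub : PU ⊆ U)
    (m : ℕ) (hPUcard : PU.card = m)
    (r : ℕ)
    (T : ℝ) (hT : TPR rk PU r ≤ T)
    (Pstar : Finset α) (hstarsub : Pstar ⊆ U) (hstarcard : Pstar.card = m)
    (hstarT : TPR rk Pstar r ≥ T)
    (hmin : ∀ S : Finset α, S ⊆ U → S.card = m → TPR rk S r ≥ T →
      TPR rk Pstar r ≤ TPR rk S r) :
    ∀ S : Finset α, S ⊆ U → S.card = m → TPR rk S r ≥ T →
      FPR rk (PL ∪ S) r ≤ FPR rk (PL ∪ Pstar) r ∧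
        FPR rk (PL ∪ Pstar) r ≤ FPR rk (PL ∪ PU) r := by
  intro S hSsub hScard hST
  exact ⟨FPR_union_le_of_TPR_le rk (hPU.mono_right hSsub) (hPU.mono_right hstarsub)
      (hScard.trans hstarcard.symm) (hmin S hSsub hScard hST),
    FPR_union_le_of_TPR_le rk (hPU.mono_right hstarsub) (hPU.mono_right hPUsub)
      (hstarcard.trans hPUcard.symm) (hT.trans hstarT)⟩

theorem stmt_7 (rk : α ≃ Fin (Fintype.card α)) (PL NL U : Finset α)
    (hPN : Disjoint PL NL) (hPU : Disjoint PL U) (hNU : Disjoint NL U)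
    (hcover : PL ∪ NL ∪ U = Finset.univ)
    (PU : Finset α) (hPUsub : PU ⊆ U) (hPUne : PU.Nonempty)
    (m : ℕ) (hPUcard : PU.card = m) (hproper : PL ∪ PU ≠ Finset.univ)
    (r : ℕ) (hr1 : 1 ≤ r) (hr2 : r ≤ Fintype.card α)
    (T : ℝ) (hT : TPR rk PU r ≤ T)
    (Pstar : Finset α) (hstarsub : Pstar ⊆ U) (hstarcard : Pstar.card = m)
    (hstarT : TPR rk Pstar r ≥ T)
    (hmin : ∀ S : Finset α, S ⊆ U → S.card = m → TPR rk S r ≥ T →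
      TPR rk Pstar r ≤ TPR rk S r) :
    ∀ S : Finset α, S ⊆ U → S.card = m → TPR rk S r ≥ T →
      FPR rk (PL ∪ S) r ≤ FPR rk (PL ∪ Pstar) r ∧
        FPR rk (PL ∪ Pstar) r ≤ FPR rk (PL ∪ PU) r :=
  stmt_7_general rk PL U hPU PU hPUsub m hPUcard r T hT Pstar hstarsub hstarcard hstarT hmin
end

section
/- Let P1, P2 ⊆ Ω be nonempty subsets with |P2| < |P1| < |Ω|, let r ∈ {1, …, |Ω|}, and suppose TPR(P1, r) = TPR(P2, r) = t. If FPR(P2, r) < t, then FPR(P1, r) < FPR(P2, r). -/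
/-!
The top `r` positions are shared between `S` and its complement, so with `N = |Ω|` and
`t = TPR(S, r)` one has `FPR(S, r) = (r - t |S|) / (N - |S|)`. Being better than random at `r`
means `r < t N`, and under that condition this expression strictly decreases in `|S|`.
-/

open Finset

variable {α : Type*} [Fintype α] [DecidableEq α]

omit [DecidableEq α] in
theorem card_filter_rank_lt (rk : α ≃ Fin (Fintype.card α)) (r : ℕ) :
    #{x | ((rk x : Fin (Fintype.card α)) : ℕ) < r} = min (Fintype.card α) r := by
  rw [← Fin.card_filter_val_lt]
  exact card_equiv rk (by simp)

theorem card_topSet_add_card_topSet_compl (rk : α ≃ Fin (Fintype.card α)) (S : Finset α)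
    {r : ℕ} (hr : r ≤ Fintype.card α) :
    #(topSet rk S r) + #(topSet rk Sᶜ r) = r := by
  have h := card_filter_add_card_filter_not
    (s := {x | ((rk x : Fin (Fintype.card α)) : ℕ) < r}) (· ∈ S)
  rw [card_filter_rank_lt, min_eq_right hr] at h
  convert h using 3 <;> ext <;> simp [topSet, and_comm]

omit [DecidableEq α] in
/-- Holds also for `S = ∅`, where both sides vanish (`TPR` is then `0 / 0 = 0`). -/
theorem TPR_mul_card (rk : α ≃ Fin (Fintype.card α)) (S : Finset α) (r : ℕ) :
    TPR rk S r * #S = #(topSet rk S r) := by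
  rcases S.eq_empty_or_nonempty with rfl | hS
  · simp [topSet]
  · exact div_mul_cancel₀ _ (by exact_mod_cast hS.card_pos.ne')

theorem FPR_eq (rk : α ≃ Fin (Fintype.card α)) (S : Finset α) {r : ℕ}
    (hr : r ≤ Fintype.card α) :
    FPR rk S r = (r - TPR rk S r * #S) / (Fintype.card α - #S) := by
  have hadd : (#(topSet rk S r) + #(topSet rk Sᶜ r) : ℝ) = r := by
    exact_mod_cast card_topSet_add_card_topSet_compl rk S hr
  rw [FPR, TPR, card_compl, Nat.cast_sub S.card_le_univ, TPR_mul_card]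
  congr 1
  linarith

theorem FPR_lt_TPR_iff (rk : α ≃ Fin (Fintype.card α)) {S : Finset α} {r : ℕ}
    (hr : r ≤ Fintype.card α) (hS : #S < Fintype.card α) :
    FPR rk S r < TPR rk S r ↔ (r : ℝ) < TPR rk S r * Fintype.card α := by
  have hpos : (0 : ℝ) < Fintype.card α - #S := sub_pos.2 (by exact_mod_cast hS)
  rw [FPR_eq rk S hr, div_lt_iff₀ hpos]
  constructor <;> intro h <;> linarith

/-- When `r < t N`, the map `p ↦ (r - t p) / (N - p)` is strictly decreasing on `p < N`,
since `(r - t q)(N - p) - (r - t p)(N - q) = (r - t N)(q - p)`. -/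
theorem sub_mul_div_sub_lt_sub_mul_div_sub {r t N p q : ℝ} (hpq : p < q) (hqN : q < N)
    (hr : r < t * N) :
    (r - t * q) / (N - q) < (r - t * p) / (N - p) := by
  rw [div_lt_div_iff₀ (by linarith) (by linarith)]
  nlinarith

theorem stmt_10_general (rk : α ≃ Fin (Fintype.card α)) (P1 P2 : Finset α)
    (hcard : P2.card < P1.card) (hlt : P1.card < Fintype.card α)
    (r : ℕ) (hr2 : r ≤ Fintype.card α)
    (t : ℝ) (ht1 : TPR rk P1 r = t) (ht2 : TPR rk P2 r = t)
    (hfpr : FPR rk P2 r < t) :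
    FPR rk P1 r < FPR rk P2 r := by
  have hbetter : (r : ℝ) < t * Fintype.card α := by
    rw [← ht2] at hfpr ⊢
    exact (FPR_lt_TPR_iff rk hr2 (hcard.trans hlt)).1 hfpr
  rw [FPR_eq rk P1 hr2, FPR_eq rk P2 hr2, ht1, ht2]
  exact sub_mul_div_sub_lt_sub_mul_div_sub (by exact_mod_cast hcard) (by exact_mod_cast hlt)
    hbetter

theorem stmt_10 (rk : α ≃ Fin (Fintype.card α)) (P1 P2 : Finset α)
    (h1 : P1.Nonempty) (h2 : P2.Nonempty)
    (hcard : P2.card < P1.card) (hlt : P1.card < Fintype.card α)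
    (r : ℕ) (hr1 : 1 ≤ r) (hr2 : r ≤ Fintype.card α)
    (t : ℝ) (ht1 : TPR rk P1 r = t) (ht2 : TPR rk P2 r = t)
    (hfpr : FPR rk P2 r < t) :
    FPR rk P1 r < FPR rk P2 r :=
  stmt_10_general rk P1 P2 hcard hlt r hr2 t ht1 ht2 hfpr
end
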